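/- arXiv:2201.04097 — 6 statements merged into one kernel-verified Lean document; each statement's English description precedes it below -/
import Mathlib

section
/- Let a₁, …, a_m be rational numbers such that a_i ∉ ℤ for at least two indices i, and let N be a positive integer with N·a_i ∈ ℤ for all i. Then Σᵢ fract((N+1)·a_i) ≥ 1 or Σᵢ fract((N−1)·a_i) ≥ 1. More precisely, Σᵢ fract((N+1)·a_i) = Σᵢ fract(a_i) and Σᵢ fract((N−1)·a_i) = #{i : a_i ∉ ℤ} − Σᵢ fract(a_i). -/
/-- Let `a₁, …, a_m` be rational numbers such that `aᵢ ∉ ℤ` for at least two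
indices `i`, and let `N` be a positive integer with `N·aᵢ ∈ ℤ` for all `i`.  Then
`Σᵢ fract((N+1)·aᵢ) ≥ 1` or `Σᵢ fract((N−1)·aᵢ) ≥ 1`.  More precisely,
`Σᵢ fract((N+1)·aᵢ) = Σᵢ fract(aᵢ)` and
`Σᵢ fract((N−1)·aᵢ) = #{i : aᵢ ∉ ℤ} − Σᵢ fract(aᵢ)`. -/
theorem sum_fract_shift (m : ℕ) (a : Fin m → ℚ)
    (hnonint : 2 ≤ Nat.card {i : Fin m // ∀ z : ℤ, a i ≠ (z : ℚ)})
    (N : ℤ) (hN : 0 < N) (hNa : ∀ i, ∃ z : ℤ, (N : ℚ) * a i = (z : ℚ)) :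
    ((1 : ℚ) ≤ ∑ i, Int.fract (((N : ℚ) + 1) * a i) ∨
      (1 : ℚ) ≤ ∑ i, Int.fract (((N : ℚ) - 1) * a i)) ∧
    (∑ i, Int.fract (((N : ℚ) + 1) * a i) = ∑ i, Int.fract (a i)) ∧
    (∑ i, Int.fract (((N : ℚ) - 1) * a i) =
      (Nat.card {i : Fin m // ∀ z : ℤ, a i ≠ (z : ℚ)} : ℚ) - ∑ i, Int.fract (a i)) := by
  classical
  have hfz : ∀ i, (∀ z : ℤ, a i ≠ (z : ℚ)) ↔ Int.fract (a i) ≠ 0 := by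
    intro i
    constructor
    · intro h hf
      exact h ⌊a i⌋ (by have := Int.fract_add_floor (a i); rw [hf, zero_add] at this; exact this.symm)
    · intro h z hz
      exact h (by rw [hz, Int.fract_intCast])
  have h1 : ∀ i, Int.fract (((N : ℚ) + 1) * a i) = Int.fract (a i) := by
    intro i
    obtain ⟨z, hz⟩ := hNa i
    have : ((N : ℚ) + 1) * a i = (z : ℚ) + a i := by rw [← hz]; ring
    rw [this, Int.fract_intCast_add]
  have h2 : ∀ i, Int.fract (((N : ℚ) - 1) * a i) = Int.fract (-(a i)) := by
    intro i
    obtain ⟨z, hz⟩ := hNa i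
    have : ((N : ℚ) - 1) * a i = (z : ℚ) + (-(a i)) := by rw [← hz]; ring
    rw [this, Int.fract_intCast_add]
  have hcard : Nat.card {i : Fin m // ∀ z : ℤ, a i ≠ (z : ℚ)} =
      (Finset.univ.filter fun i => ∀ z : ℤ, a i ≠ (z : ℚ)).card := by
    rw [Nat.card_eq_fintype_card, Fintype.card_subtype]
  set S : Finset (Fin m) := Finset.univ.filter fun i => ∀ z : ℤ, a i ≠ (z : ℚ) with hS
  have hmemS : ∀ i, i ∈ S ↔ Int.fract (a i) ≠ 0 := by
    intro i; rw [hS, Finset.mem_filter]; simp [hfz i]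
  have hsum1 : ∑ i, Int.fract (((N : ℚ) + 1) * a i) = ∑ i, Int.fract (a i) :=
    Finset.sum_congr rfl fun i _ => h1 i
  -- sums restricted to S
  have hsa : ∑ i, Int.fract (a i) = ∑ i ∈ S, Int.fract (a i) := by
    rw [eq_comm]
    apply Finset.sum_subset (Finset.subset_univ S)
    intro i _ hi
    by_contra h
    exact hi ((hmemS i).2 h)
  have hsum2 : ∑ i, Int.fract (((N : ℚ) - 1) * a i) = (S.card : ℚ) - ∑ i, Int.fract (a i) := by
    have : ∑ i, Int.fract (-(a i)) = ∑ i ∈ S, Int.fract (-(a i)) := by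
      rw [eq_comm]
      apply Finset.sum_subset (Finset.subset_univ S)
      intro i _ hi
      by_contra h
      apply hi
      rw [hmemS i]
      intro h0
      exact h (Int.fract_neg_eq_zero.2 h0)
    calc ∑ i, Int.fract (((N : ℚ) - 1) * a i) = ∑ i ∈ S, Int.fract (-(a i)) := by
          rw [← this]; exact Finset.sum_congr rfl fun i _ => h2 i
      _ = ∑ i ∈ S, (1 - Int.fract (a i)) := by
          apply Finset.sum_congr rfl
          intro i hi
          exact Int.fract_neg ((hmemS i).1 hi)
      _ = (S.card : ℚ) - ∑ i ∈ S, Int.fract (a i) := by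
          rw [Finset.sum_sub_distrib, Finset.sum_const, nsmul_eq_mul, mul_one]
      _ = (S.card : ℚ) - ∑ i, Int.fract (a i) := by rw [hsa]
  refine ⟨?_, hsum1, by rw [hsum2, hcard]⟩
  by_cases h : (1 : ℚ) ≤ ∑ i, Int.fract (a i)
  · left; rw [hsum1]; exact h
  · right
    rw [hsum2]
    have h2le : (2 : ℚ) ≤ (S.card : ℚ) := by
      rw [hcard] at hnonint
      exact_mod_cast hnonint
    linarith
end

section
/- Let k be a field of characteristic 0, n ≥ 2 an integer, z₀,…,z_n ∈ k, a ∈ k with a ≠ 0, and b ∈ k. Write f = Σ_{j=0}^{n} C(n,j)·z_j·x^{n−j}·y^{j}, and define z'₀,…,z'_n by f(a·x, b·x + a^{−1}·y) = Σ_{j=0}^{n} C(n,j)·z'_j·x^{n−j}·y^{j}. Then z'_n = a^{−n}·z_n and z'_{n−2}·z'_n − (z'_{n−1})² = a^{4−2n}·(z_{n−2}·z_n − z_{n−1}²). (Thus, in the coordinates z₀,…,z_n on the space of binary forms of degree n, the functions z_n and z_{n−2}z_n − z_{n−1}² are semi-invariant eigenfunctions under the Borel subgroup of triangular matrices in SL(2,k),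 of weights n and 2n−4 respectively.) -/
open MvPolynomial

/-- **Statement 11.** Let `k` be a field of characteristic 0, `n ≥ 2`, `z₀,…,zₙ ∈ k`, `a ≠ 0`,
`b ∈ k`.  Write `f = Σⱼ C(n,j)·zⱼ·x^(n-j)·y^j` and define `z'₀,…,z'ₙ` by
`f(a·x, b·x + a⁻¹·y) = Σⱼ C(n,j)·z'ⱼ·x^(n-j)·y^j`.  Then `z'ₙ = a⁻ⁿ·zₙ` and
`z'_{n−2}·z'ₙ − (z'_{n−1})² = a^(4−2n)·(z_{n−2}·zₙ − z_{n−1}²)`; i.e. `zₙ` and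
`z_{n−2}zₙ − z_{n−1}²` are Borel semi-invariants of weights `n` and `2n−4`. -/
theorem borel_semiinvariants_of_binary_forms
    (k : Type*) [Field k] [CharZero k] (n : ℕ) (hn : 2 ≤ n)
    (z z' : ℕ → k) (a b : k) (ha : a ≠ 0)
    (h : MvPolynomial.aeval
        (fun i : Fin 2 =>
          if i = 0 then C a * X 0 else C b * X 0 + C a⁻¹ * X 1)
        (∑ j ∈ Finset.range (n + 1), C ((n.choose j : k) * z j) * X 0 ^ (n - j) * X 1 ^ j)
      = ∑ j ∈ Finset.range (n + 1), C ((n.choose j : k) * z' j) * X 0 ^ (n - j) * X 1 ^ j) :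
    z' n = a⁻¹ ^ n * z n ∧
    z' (n - 2) * z' n - z' (n - 1) ^ 2 =
      a ^ (4 - 2 * (n : ℤ)) * (z (n - 2) * z n - z (n - 1) ^ 2) := by
  obtain ⟨m, rfl⟩ : ∃ m, n = m + 2 := ⟨n - 2, by omega⟩
  -- transfer to univariate polynomials by X 0 ↦ 1, X 1 ↦ X
  have h2 := congrArg (fun p : MvPolynomial ℕ k =>
    aeval (fun i : ℕ => if i = 0 then (1:Polynomial k) else Polynomial.X) p) h
  simp only [map_sum, map_mul, map_add, map_pow, aeval_C, aeval_X,
    MvPolynomial.algebraMap_eq, Polynomial.algebraMap_eq, one_ne_zero, if_false, if_true,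
    reduceIte, one_pow, mul_one] at h2
  have key : (Polynomial.C b + Polynomial.C a⁻¹ * Polynomial.X : Polynomial k)
      = Polynomial.C a⁻¹ * (Polynomial.X + Polynomial.C (a*b)) := by
    rw [mul_add, ← Polynomial.C_mul, inv_mul_cancel_left₀ ha, add_comm]
  rw [key] at h2
  -- extract coefficients
  have hc := fun M : ℕ => congrArg (fun p => Polynomial.coeff p M) h2
  simp only [Polynomial.finset_sum_coeff, mul_pow, ← Polynomial.C_pow, mul_assoc,
    Polynomial.coeff_C_mul, Polynomial.coeff_X_pow, Polynomial.coeff_X_add_C_pow] at hc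
  have hzero : ∀ M : ℕ, m ≤ M → ∑ x ∈ Finset.range m,
      ((m+2).choose x : k) * (z x * (a ^ (m+2 - x) * (a⁻¹ ^ x * (a ^ (x - M) * (b ^ (x - M) * (x.choose M : k)))))) = 0 := by
    intro M hM
    refine Finset.sum_eq_zero fun x hx => ?_
    rw [Nat.choose_eq_zero_of_lt (lt_of_lt_of_le (Finset.mem_range.mp hx) hM)]
    simp
  have hA := hc (m+2)
  have hB := hc (m+1)
  have hC := hc m
  simp only [Finset.sum_range_succ] at hA hB hC
  rw [hzero (m+2) (by omega)] at hA
  rw [hzero (m+1) (by omega)] at hB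
  rw [hzero m (by omega)] at hC
  simp only [Nat.choose_self, Nat.choose_eq_zero_of_lt (by omega : m < m+1),
    Nat.choose_eq_zero_of_lt (by omega : m < m+2), Nat.choose_eq_zero_of_lt (by omega : m+1 < m+2),
    Nat.add_sub_cancel_left, Nat.sub_self, Nat.cast_one, Nat.cast_zero,
    show m + 2 - (m+1) = 1 from by omega] at hA hB hC
  norm_num at hA hB hC
  -- hA : z (m + 2) * (a ^ (m + 2))⁻¹ = z' (m + 2)
  have e1 : z' (m+2) = a⁻¹ ^ (m+2) * z (m+2) := by rw [← hA, inv_pow]; ring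
  have hm1 : ((m:k) + 1 + 1) ≠ 0 := by
    have : ((m+2 : ℕ) : k) ≠ 0 := Nat.cast_ne_zero.mpr (by omega)
    push_cast at this
    rwa [show (m:k)+1+1 = (m:k)+2 from by ring]
  have e2 : z' (m+1) = a * a⁻¹^(m+1) * z (m+1) + a * b * a⁻¹^(m+2) * z (m+2) := by
    apply mul_left_cancel₀ hm1
    rw [← hB]
    ring
  have hch : 2 * ((m+2).choose m) = (m+2) * (m+1) := by
    have hsymm := Nat.choose_symm (show 2 ≤ m+2 by omega)
    rw [show m+2-2 = m from by omega] at hsymm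
    rw [hsymm, Nat.choose_two_right, show m+2-1 = m+1 from by omega,
      Nat.mul_div_cancel' (by simpa [mul_comm] using (Nat.even_mul_succ_self (m+1)).two_dvd)]
  have hchk : 2 * (((m+2).choose m : k)) = ((m:k)+1+1)*((m:k)+1) := by
    have := congrArg (Nat.cast (R := k)) hch
    push_cast at this
    linear_combination this
  have hc0 : (((m+2).choose m : ℕ) : k) ≠ 0 :=
    Nat.cast_ne_zero.mpr (Nat.choose_pos (by omega)).ne'
  have e3 : z' m = a^2 * a⁻¹^m * z m + 2 * a^2 * b * a⁻¹^(m+1) * z (m+1)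
      + a^2 * b^2 * a⁻¹^(m+2) * z (m+2) := by
    apply mul_left_cancel₀ hc0
    rw [← hC]
    linear_combination (-(z (m+1) * a^2 * b * a⁻¹^(m+1))) * hchk
  constructor
  · exact e1
  · rw [show m + 2 - 2 = m from by omega, show m + 2 - 1 = m + 1 from by omega]
    rw [e3, e2, e1]
    rw [show (4 - 2 * ((m+2:ℕ):ℤ)) = -((2*m : ℕ) : ℤ) from by push_cast; ring, zpow_neg, zpow_natCast]
    have hu : a * a⁻¹ = 1 := mul_inv_cancel₀ ha
    linear_combination ((a*a⁻¹ + 1) * a⁻¹^(2*m) * (z m * z (m+2) - z (m+1)^2)) * hu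
end

section
/- G = SL(2,ℂ) acts transitively on X ∖ (Δ ∪ E ∪ F): any two points of X lying in none of Δ, E, F lie in the same G-orbit, so X ∖ (Δ ∪ E ∪ F) is the open G-orbit of X. -/
open Matrix

/-- A point of `ℙ¹ × ℙ¹ × ℙ²` in homogeneous coordinates: `x, y` are nonzero vectors in `ℂ²`
(homogeneous coordinates on the two `ℙ¹`-factors) and `z` is a nonzero symmetric `2×2` complex
matrix (homogeneous coordinates `[z₀:z₁:z₂]` on `ℙ²`, the projectivized symmetric matrices,
via `z = [[z₀,z₁],[z₁,z₂]]`). -/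
structure ProjPoint where
  x : Fin 2 → ℂ
  y : Fin 2 → ℂ
  z : Matrix (Fin 2) (Fin 2) ℂ
  hx : x ≠ 0
  hy : y ≠ 0
  hz : z ≠ 0
  hzsymm : zᵀ = z

/-- Membership in the threefold `X`:
`x₀y₀z₂ + x₁y₁z₀ − x₀y₁z₁ − x₁y₀z₁ = 0`. -/
def onX (p : ProjPoint) : Prop :=
  p.x 0 * p.y 0 * p.z 1 1 + p.x 1 * p.y 1 * p.z 0 0
    - p.x 0 * p.y 1 * p.z 0 1 - p.x 1 * p.y 0 * p.z 0 1 = 0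

/-- Membership in `Δ = X ∩ {x₀y₁ − x₁y₀ = 0}`. -/
def memDelta (p : ProjPoint) : Prop := p.x 0 * p.y 1 - p.x 1 * p.y 0 = 0

/-- Membership in `E = X ∩ {x₁z₀ − x₀z₁ = 0, x₁z₁ − x₀z₂ = 0}`. -/
def memE (p : ProjPoint) : Prop :=
  p.x 1 * p.z 0 0 - p.x 0 * p.z 0 1 = 0 ∧ p.x 1 * p.z 0 1 - p.x 0 * p.z 1 1 = 0

/-- Membership in `F = X ∩ {y₁z₀ − y₀z₁ = 0, y₀z₂ − y₁z₁ = 0}`. -/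
def memF (p : ProjPoint) : Prop :=
  p.y 1 * p.z 0 0 - p.y 0 * p.z 0 1 = 0 ∧ p.y 0 * p.z 1 1 - p.y 1 * p.z 0 1 = 0

/-- Two points of `ℙ¹ × ℙ¹ × ℙ²` lie in the same orbit of the diagonal `SL(2,ℂ)`-action, where
`SL(2,ℂ)` acts standardly on each `ℙ¹`-factor and by `g·[M] := [g M gᵀ]` on `ℙ²`. -/
def sameOrbit (p q : ProjPoint) : Prop :=
  ∃ g : Matrix.SpecialLinearGroup (Fin 2) ℂ, ∃ a b c : ℂ,
    a ≠ 0 ∧ b ≠ 0 ∧ c ≠ 0 ∧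
    (g : Matrix (Fin 2) (Fin 2) ℂ) *ᵥ p.x = a • q.x ∧
    (g : Matrix (Fin 2) (Fin 2) ℂ) *ᵥ p.y = b • q.y ∧
    (g : Matrix (Fin 2) (Fin 2) ℂ) * p.z * (g : Matrix (Fin 2) (Fin 2) ℂ)ᵀ = c • q.z

/-- The base point: `([1:0],[0:1],[1:0:1])`. -/
noncomputable def basePt : ProjPoint where
  x := ![1,0]
  y := ![0,1]
  z := 1
  hx := by intro h; have := congrFun h 0; simp at this
  hy := by intro h; have := congrFun h 1; simp at this
  hz := by
    intro h
    have := congrFun (congrFun h 0) 0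
    simp [Matrix.one_apply] at this
  hzsymm := Matrix.transpose_one

lemma toBase (p : ProjPoint) (hp : onX p) (hpD : ¬ memDelta p)
    (hpE : ¬ memE p) (hpF : ¬ memF p) : sameOrbit p basePt := by
  unfold onX at hp
  set x0 := p.x 0 with hx0d
  set x1 := p.x 1 with hx1d
  set y0 := p.y 0 with hy0d
  set y1 := p.y 1 with hy1d
  set z00 := p.z 0 0 with hz00d
  set z01 := p.z 0 1 with hz01d
  set z11 := p.z 1 1 with hz11d
  have hz10 : p.z 1 0 = z01 := by
    have := congrFun (congrFun p.hzsymm 0) 1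
    simpa [Matrix.transpose_apply] using this
  have hD : x0 * y1 - x1 * y0 ≠ 0 := hpD
  have hα : y1 * y1 * z00 - 2 * y0 * y1 * z01 + y0 * y0 * z11 ≠ 0 := by
    intro h
    apply hpF
    have hu : (x0 * y1 - x1 * y0) * (y1 * z00 - y0 * z01) = 0 := by
      linear_combination x0 * h - y0 * hp
    have hv : (x0 * y1 - x1 * y0) * (y0 * z11 - y1 * z01) = 0 := by
      linear_combination y1 * hp - x1 * h
    exact ⟨(mul_eq_zero.mp hu).resolve_left hD, (mul_eq_zero.mp hv).resolve_left hD⟩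
  have hβ : x1 * x1 * z00 - 2 * x0 * x1 * z01 + x0 * x0 * z11 ≠ 0 := by
    intro h
    apply hpE
    have hu : (x0 * y1 - x1 * y0) * (x1 * z00 - x0 * z01) = 0 := by
      linear_combination x0 * hp - y0 * h
    have hv : (x0 * y1 - x1 * y0) * (x1 * z01 - x0 * z11) = 0 := by
      linear_combination x1 * hp - y1 * h
    exact ⟨(mul_eq_zero.mp hu).resolve_left hD, (mul_eq_zero.mp hv).resolve_left hD⟩
  set α := y1 * y1 * z00 - 2 * y0 * y1 * z01 + y0 * y0 * z11 with hαd
  set β := x1 * x1 * z00 - 2 * x0 * x1 * z01 + x0 * x0 * z11 with hβd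
  obtain ⟨s, hs⟩ := IsAlgClosed.exists_pow_nat_eq ((x0 * y1 - x1 * y0)⁻¹) (n := 2) (by norm_num)
  have hs0 : s ≠ 0 := by
    intro h
    rw [h] at hs
    exact inv_ne_zero hD (by simpa using hs.symm)
  have hs1 : s ^ 2 * (x0 * y1 - x1 * y0) = 1 := by
    rw [hs]; field_simp
  obtain ⟨t, ht⟩ := IsAlgClosed.exists_pow_nat_eq (β * α⁻¹) (n := 4) (by norm_num)
  have ht0 : t ≠ 0 := by
    intro h
    rw [h] at ht
    apply hβ
    have : β * α⁻¹ = 0 := by simpa using ht.symm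
    rcases mul_eq_zero.mp this with h' | h'
    · exact h'
    · exact absurd h' (inv_ne_zero hα)
  have hβ4 : β = t ^ 4 * α := by
    rw [ht, inv_mul_cancel_right₀ hα]
  set T := t⁻¹ with hTd
  have hT : t * T = 1 := mul_inv_cancel₀ ht0
  have hT0 : T ≠ 0 := by
    intro h; rw [h, mul_zero] at hT; exact zero_ne_one hT
  set M : Matrix (Fin 2) (Fin 2) ℂ :=
    !![t * s * y1, -(t * s * y0); -(T * s * x1), T * s * x0] with hMd
  have hdet : M.det = 1 := by
    rw [hMd, Matrix.det_fin_two_of]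
    linear_combination t * T * hs1 + hT
  refine ⟨⟨M, hdet⟩, t * s * (x0 * y1 - x1 * y0), T * s * (x0 * y1 - x1 * y0),
    t ^ 2 * s ^ 2 * α, by simp [ht0, hs0, hD], by simp [hT0, hs0, hD],
    by simp [ht0, hs0, hα], ?_, ?_, ?_⟩
  · funext i
    fin_cases i <;>
      · simp [hMd, Matrix.mulVec, dotProduct, Fin.sum_univ_two, basePt,
          ← hx0d, ← hx1d]
        ring
  · funext i
    fin_cases i <;>
      · simp [hMd, Matrix.mulVec, dotProduct, Fin.sum_univ_two, basePt,
          ← hy0d, ← hy1d]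
        ring
  · ext i j
    fin_cases i <;> fin_cases j
    · simp [hMd, Matrix.mul_apply, Matrix.vecMul, Matrix.vecHead, Matrix.vecTail,
        dotProduct, Fin.sum_univ_two, Matrix.transpose_apply, basePt,
        Matrix.one_apply, hz10, ← hz00d, ← hz01d, ← hz11d]
      ring
    · simp [hMd, Matrix.mul_apply, Matrix.vecMul, Matrix.vecHead, Matrix.vecTail,
        dotProduct, Fin.sum_univ_two, Matrix.transpose_apply, basePt,
        Matrix.one_apply, hz10, ← hz00d, ← hz01d, ← hz11d]
      linear_combination (-(t * T * s ^ 2)) * hp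
    · simp [hMd, Matrix.mul_apply, Matrix.vecMul, Matrix.vecHead, Matrix.vecTail,
        dotProduct, Fin.sum_univ_two, Matrix.transpose_apply, basePt,
        Matrix.one_apply, hz10, ← hz00d, ← hz01d, ← hz11d]
      linear_combination (-(t * T * s ^ 2)) * hp
    · simp [hMd, Matrix.mul_apply, Matrix.vecMul, Matrix.vecHead, Matrix.vecTail,
        dotProduct, Fin.sum_univ_two, Matrix.transpose_apply, basePt,
        Matrix.one_apply, hz10, ← hz00d, ← hz01d, ← hz11d]
      linear_combination (T ^ 2 * s ^ 2) * hβ4 + (s ^ 2 * α * t ^ 2 * (T * t + 1)) * hT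

lemma sameOrbit_cancel {p q r : ProjPoint} (h1 : sameOrbit p r) (h2 : sameOrbit q r) :
    sameOrbit p q := by
  obtain ⟨g1, a1, b1, c1, ha1, hb1, hc1, hx1, hy1, hz1⟩ := h1
  obtain ⟨g2, a2, b2, c2, ha2, hb2, hc2, hx2, hy2, hz2⟩ := h2
  have hinv : (↑(g2⁻¹) : Matrix (Fin 2) (Fin 2) ℂ) * (↑g2 : Matrix (Fin 2) (Fin 2) ℂ) = 1 := by
    rw [← Matrix.SpecialLinearGroup.coe_mul]
    simp
  have hTinv : (↑g2 : Matrix (Fin 2) (Fin 2) ℂ)ᵀ * (↑(g2⁻¹) : Matrix (Fin 2) (Fin 2) ℂ)ᵀ = 1 := by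
    rw [← Matrix.transpose_mul, hinv, Matrix.transpose_one]
  have key : ∀ (v w : Fin 2 → ℂ) (a : ℂ), a ≠ 0 →
      (↑g2 : Matrix (Fin 2) (Fin 2) ℂ) *ᵥ v = a • w →
      (↑(g2⁻¹) : Matrix (Fin 2) (Fin 2) ℂ) *ᵥ w = a⁻¹ • v := by
    intro v w a ha h
    have e : (↑(g2⁻¹) : Matrix (Fin 2) (Fin 2) ℂ) *ᵥ ((↑g2 : Matrix (Fin 2) (Fin 2) ℂ) *ᵥ v)
        = (↑(g2⁻¹) : Matrix (Fin 2) (Fin 2) ℂ) *ᵥ (a • w) := by rw [h]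
    rw [Matrix.mulVec_mulVec, hinv, Matrix.one_mulVec, Matrix.mulVec_smul] at e
    rw [← inv_smul_eq_iff₀ ha] at e
    exact e.symm
  have hqx := key _ _ _ ha2 hx2
  have hqy := key _ _ _ hb2 hy2
  have hqz : (↑(g2⁻¹) : Matrix (Fin 2) (Fin 2) ℂ) * r.z * (↑(g2⁻¹) : Matrix (Fin 2) (Fin 2) ℂ)ᵀ
      = c2⁻¹ • q.z := by
    have e2 : q.z = c2 • ((↑(g2⁻¹) : Matrix (Fin 2) (Fin 2) ℂ) * r.z
        * (↑(g2⁻¹) : Matrix (Fin 2) (Fin 2) ℂ)ᵀ) := by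
      calc q.z = ((↑(g2⁻¹) : Matrix (Fin 2) (Fin 2) ℂ) * (↑g2 : Matrix (Fin 2) (Fin 2) ℂ)) * q.z
            * ((↑g2 : Matrix (Fin 2) (Fin 2) ℂ)ᵀ * (↑(g2⁻¹) : Matrix (Fin 2) (Fin 2) ℂ)ᵀ) := by
            rw [hinv, hTinv]; simp
        _ = (↑(g2⁻¹) : Matrix (Fin 2) (Fin 2) ℂ) * ((↑g2 : Matrix (Fin 2) (Fin 2) ℂ) * q.z
            * (↑g2 : Matrix (Fin 2) (Fin 2) ℂ)ᵀ) * (↑(g2⁻¹) : Matrix (Fin 2) (Fin 2) ℂ)ᵀ := by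
            simp only [Matrix.mul_assoc]
        _ = (↑(g2⁻¹) : Matrix (Fin 2) (Fin 2) ℂ) * (c2 • r.z)
            * (↑(g2⁻¹) : Matrix (Fin 2) (Fin 2) ℂ)ᵀ := by rw [hz2]
        _ = c2 • ((↑(g2⁻¹) : Matrix (Fin 2) (Fin 2) ℂ) * r.z
            * (↑(g2⁻¹) : Matrix (Fin 2) (Fin 2) ℂ)ᵀ) := by
            rw [Matrix.mul_smul, Matrix.smul_mul]
    rw [e2, smul_smul, inv_mul_cancel₀ hc2, one_smul]
  refine ⟨g2⁻¹ * g1, a1 * a2⁻¹, b1 * b2⁻¹, c1 * c2⁻¹,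
    mul_ne_zero ha1 (inv_ne_zero ha2), mul_ne_zero hb1 (inv_ne_zero hb2),
    mul_ne_zero hc1 (inv_ne_zero hc2), ?_, ?_, ?_⟩
  · rw [Matrix.SpecialLinearGroup.coe_mul, ← Matrix.mulVec_mulVec, hx1,
      Matrix.mulVec_smul, hqx, smul_smul]
  · rw [Matrix.SpecialLinearGroup.coe_mul, ← Matrix.mulVec_mulVec, hy1,
      Matrix.mulVec_smul, hqy, smul_smul]
  · rw [Matrix.SpecialLinearGroup.coe_mul, Matrix.transpose_mul]
    calc ((↑(g2⁻¹) : Matrix (Fin 2) (Fin 2) ℂ) * (↑g1 : Matrix (Fin 2) (Fin 2) ℂ)) * p.z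
          * ((↑g1 : Matrix (Fin 2) (Fin 2) ℂ)ᵀ * (↑(g2⁻¹) : Matrix (Fin 2) (Fin 2) ℂ)ᵀ)
        = (↑(g2⁻¹) : Matrix (Fin 2) (Fin 2) ℂ) * ((↑g1 : Matrix (Fin 2) (Fin 2) ℂ) * p.z
          * (↑g1 : Matrix (Fin 2) (Fin 2) ℂ)ᵀ) * (↑(g2⁻¹) : Matrix (Fin 2) (Fin 2) ℂ)ᵀ := by
          simp only [Matrix.mul_assoc]
      _ = (↑(g2⁻¹) : Matrix (Fin 2) (Fin 2) ℂ) * (c1 • r.z)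
          * (↑(g2⁻¹) : Matrix (Fin 2) (Fin 2) ℂ)ᵀ := by rw [hz1]
      _ = c1 • ((↑(g2⁻¹) : Matrix (Fin 2) (Fin 2) ℂ) * r.z
          * (↑(g2⁻¹) : Matrix (Fin 2) (Fin 2) ℂ)ᵀ) := by rw [Matrix.mul_smul, Matrix.smul_mul]
      _ = (c1 * c2⁻¹) • q.z := by rw [hqz, smul_smul]

/-- `G = SL(2,ℂ)` acts transitively on `X ∖ (Δ ∪ E ∪ F)`: any two points of
`X` lying in none of `Δ, E, F` lie in the same `G`-orbit, so `X ∖ (Δ ∪ E ∪ F)` is the open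
`G`-orbit of `X`. -/
theorem open_orbit_transitive (p q : ProjPoint) (hp : onX p) (hq : onX q)
    (hpD : ¬ memDelta p) (hpE : ¬ memE p) (hpF : ¬ memF p)
    (hqD : ¬ memDelta q) (hqE : ¬ memE q) (hqF : ¬ memF q) :
    sameOrbit p q := by
  exact sameOrbit_cancel (toBase p hp hpD hpE hpF) (toBase q hq hqD hqE hqF)
end

section
/- Δ ∖ (E ∪ F) is a single orbit of G = SL(2,ℂ): any two points of Δ lying in neither E nor F lie in the same G-orbit. -/
open Matrix

/-! On `Δ` the two `ℙ¹`-coordinates agree, `[y] = [x]`, and the equation of `X` then says that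
the quadratic form of `z` vanishes at `x^⊥`. Such a symmetric `z` is a symmetrised product
`x vᵀ + v xᵀ`, and `z x^⊥ = -det (x, v) • x`, so `p ∉ E` says exactly that `(x, v)` is a basis.
The matrix with columns `x, v`, rescaled into `SL(2, ℂ)`, moves `([1:0], [1:0], [[0,1],[1,0]])`
to `p`. -/

section Plane

variable {K : Type*} [Field K]

/-- The quarter turn `(x₀, x₁) ↦ (x₁, -x₀)`, so that `u ⬝ᵥ perp v = u₀v₁ - u₁v₀ = det (u, v)`. -/
def perp (x : Fin 2 → K) : Fin 2 → K := ![x 1, -x 0]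

lemma perp_smul (c : K) (x : Fin 2 → K) : perp (c • x) = c • perp x := by
  ext i; fin_cases i <;> simp [perp]

lemma dotProduct_perp_comm (u v : Fin 2 → K) : u ⬝ᵥ perp v = -(v ⬝ᵥ perp u) := by
  simp [perp, dotProduct, Fin.sum_univ_two]; ring

lemma exists_dotProduct_eq_one {ι : Type*} [Fintype ι] [DecidableEq ι] {x : ι → K}
    (hx : x ≠ 0) : ∃ r, x ⬝ᵥ r = 1 := by
  obtain ⟨i, hi⟩ := Function.ne_iff.mp hx
  exact ⟨Pi.single i (x i)⁻¹, by rw [dotProduct_single, mul_inv_cancel₀ hi]⟩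

lemma eq_smul_of_dotProduct_perp_eq_zero {x r u : Fin 2 → K} (hr : x ⬝ᵥ r = 1)
    (h : u ⬝ᵥ perp x = 0) : u = (u ⬝ᵥ r) • x := by
  simp only [perp, dotProduct, Fin.sum_univ_two, cons_val_zero, cons_val_one, cons_val_fin_one,
    mul_neg] at hr h
  ext i; fin_cases i <;>
    simp only [Fin.zero_eta, Fin.mk_one, dotProduct, Fin.sum_univ_two, Pi.smul_apply, smul_eq_mul]
      <;> grind

lemma exists_eq_vecMulVec_add_vecMulVec [NeZero (2 : K)] {x r : Fin 2 → K}
    (hr : x ⬝ᵥ r = 1) {z : Matrix (Fin 2) (Fin 2) K} (hz : z.IsSymm)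
    (h : perp x ⬝ᵥ z *ᵥ perp x = 0) : ∃ v, z = vecMulVec x v + vecMulVec v x := by
  -- applying `z = x vᵀ + v xᵀ` to `r` forces this `v`
  refine ⟨z *ᵥ r - (r ⬝ᵥ z *ᵥ r / 2) • x, ?_⟩
  have hz10 : z 1 0 = z 0 1 := hz.apply 0 1
  have h2 : (2 : K) ≠ 0 := two_ne_zero
  simp only [perp, dotProduct, mulVec, Fin.sum_univ_two, cons_val_zero, cons_val_one,
    cons_val_fin_one, mul_neg, neg_mul] at hr h
  ext i j
  simp only [Matrix.add_apply, vecMulVec_apply, Pi.sub_apply, Pi.smul_apply, smul_eq_mul,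
    mulVec, dotProduct, Fin.sum_univ_two]
  fin_cases i <;> fin_cases j <;> grind

lemma vecMulVec_add_vecMulVec_mulVec_perp (x v : Fin 2 → K) :
    (vecMulVec x v + vecMulVec v x) *ᵥ perp x = (v ⬝ᵥ perp x) • x := by
  ext i; fin_cases i <;> simp [perp, mulVec, dotProduct, vecMulVec_apply, Fin.sum_univ_two] <;> ring

lemma det_transpose_of_fin_two (x v : Fin 2 → K) : (of ![x, v])ᵀ.det = x ⬝ᵥ perp v := by
  simp [det_fin_two, perp, dotProduct, Fin.sum_univ_two]; ring

lemma transpose_of_mulVec_one_zero (x v : Fin 2 → K) : (of ![x, v])ᵀ *ᵥ ![1, 0] = x := by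
  ext i; fin_cases i <;> simp [mulVec, dotProduct, Fin.sum_univ_two]

lemma transpose_of_mul_antidiag_mul_of (x v : Fin 2 → K) :
    (of ![x, v])ᵀ * !![0, 1; 1, 0] * of ![x, v] = vecMulVec x v + vecMulVec v x := by
  ext i j; fin_cases i <;> fin_cases j <;> simp [mul_apply, vecMulVec_apply, Fin.sum_univ_two]
    <;> ring

end Plane

lemma mul_mul_mul_transpose_mul {n R : Type*} [Fintype n] [CommSemiring R] (A B M : Matrix n n R) :
    A * B * M * (A * B)ᵀ = A * (B * M * Bᵀ) * Aᵀ := by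
  rw [transpose_mul]; simp only [Matrix.mul_assoc]

lemma exists_specialLinearGroup_eq_smul {K n : Type*} [Field K] [IsAlgClosed K] [Fintype n]
    [DecidableEq n] [Nonempty n] {A : Matrix n n K} (hA : A.det ≠ 0) :
    ∃ g : SpecialLinearGroup n K, ∃ s : K, s ≠ 0 ∧ (g : Matrix n n K) = s • A := by
  obtain ⟨s, hs⟩ := IsAlgClosed.exists_pow_nat_eq A.det⁻¹ (Fintype.card_pos (α := n))
  have hs0 : s ≠ 0 := by
    rintro rfl
    exact hA (by simpa [Fintype.card_ne_zero, eq_comm] using hs)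
  exact ⟨⟨s • A, by rw [det_smul, hs, inv_mul_cancel₀ hA]⟩, s, hs0, rfl⟩

def stdPoint : ProjPoint where
  x := ![1, 0]
  y := ![1, 0]
  z := !![0, 1; 1, 0]
  hx := by simp
  hy := by simp
  hz := by simp [← Matrix.ext_iff, Fin.forall_fin_two]
  hzsymm := by ext i j; fin_cases i <;> fin_cases j <;> rfl

namespace sameOrbit

lemma symm {p q : ProjPoint} (h : sameOrbit p q) : sameOrbit q p := by
  obtain ⟨g, a, b, c, ha, hb, hc, hx, hy, hz⟩ := h
  set A : Matrix (Fin 2) (Fin 2) ℂ := ↑g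
  set B : Matrix (Fin 2) (Fin 2) ℂ := ↑g⁻¹
  have hBA : B * A = 1 := by
    rw [← Matrix.SpecialLinearGroup.coe_mul, inv_mul_cancel, Matrix.SpecialLinearGroup.coe_one]
  refine ⟨g⁻¹, a⁻¹, b⁻¹, c⁻¹, inv_ne_zero ha, inv_ne_zero hb, inv_ne_zero hc, ?_, ?_, ?_⟩
  · rw [show q.x = a⁻¹ • (A *ᵥ p.x) by rw [hx, inv_smul_smul₀ ha], mulVec_smul, mulVec_mulVec,
      hBA, one_mulVec]
  · rw [show q.y = b⁻¹ • (A *ᵥ p.y) by rw [hy, inv_smul_smul₀ hb], mulVec_smul, mulVec_mulVec,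
      hBA, one_mulVec]
  · rw [show q.z = c⁻¹ • (A * p.z * Aᵀ) by rw [hz, inv_smul_smul₀ hc], Matrix.mul_smul,
      Matrix.smul_mul, ← mul_mul_mul_transpose_mul, hBA, Matrix.one_mul, transpose_one, Matrix.mul_one]

lemma trans {p q r : ProjPoint} (hpq : sameOrbit p q) (hqr : sameOrbit q r) : sameOrbit p r := by
  obtain ⟨g, a, b, c, ha, hb, hc, hx, hy, hz⟩ := hpq
  obtain ⟨g', a', b', c', ha', hb', hc', hx', hy', hz'⟩ := hqr
  refine ⟨g' * g, a' * a, b' * b, c' * c, mul_ne_zero ha' ha, mul_ne_zero hb' hb,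
    mul_ne_zero hc' hc, ?_, ?_, ?_⟩
  · rw [Matrix.SpecialLinearGroup.coe_mul, ← mulVec_mulVec, hx, mulVec_smul, hx', smul_smul,
      mul_comm]
  · rw [Matrix.SpecialLinearGroup.coe_mul, ← mulVec_mulVec, hy, mulVec_smul, hy', smul_smul,
      mul_comm]
  · rw [Matrix.SpecialLinearGroup.coe_mul, mul_mul_mul_transpose_mul, hz, Matrix.mul_smul,
      Matrix.smul_mul, hz', smul_smul, mul_comm]

end sameOrbit

lemma onX_iff (p : ProjPoint) : onX p ↔ perp p.x ⬝ᵥ p.z *ᵥ perp p.y = 0 := by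
  have hz10 : p.z 1 0 = p.z 0 1 := IsSymm.apply p.hzsymm 0 1
  rw [onX]
  simp only [perp, dotProduct, mulVec, Fin.sum_univ_two, cons_val_zero, cons_val_one,
    cons_val_fin_one, mul_neg, neg_mul, hz10]
  constructor <;> intro h <;> linear_combination h

lemma memDelta_iff (p : ProjPoint) : memDelta p ↔ p.y ⬝ᵥ perp p.x = 0 := by
  rw [memDelta, dotProduct_perp_comm, neg_eq_zero]
  simp [perp, dotProduct, Fin.sum_univ_two, sub_eq_add_neg]

lemma memE_iff (p : ProjPoint) : memE p ↔ p.z *ᵥ perp p.x = 0 := by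
  have hz10 : p.z 1 0 = p.z 0 1 := IsSymm.apply p.hzsymm 0 1
  rw [memE, funext_iff, Fin.forall_fin_two]
  simp only [perp, mulVec, dotProduct, Fin.sum_univ_two, cons_val_zero, cons_val_one,
    cons_val_fin_one, mul_neg, Pi.zero_apply, hz10]
  ring_nf

lemma sameOrbit_stdPoint {p : ProjPoint} (hp : onX p) (hpD : memDelta p) (hpE : ¬ memE p) :
    sameOrbit stdPoint p := by
  obtain ⟨r, hr⟩ := exists_dotProduct_eq_one p.hx
  set μ := p.y ⬝ᵥ r
  have hy : p.y = μ • p.x := eq_smul_of_dotProduct_perp_eq_zero hr ((memDelta_iff p).mp hpD)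
  have hμ : μ ≠ 0 := by rintro hμ; exact p.hy (by rw [hy, hμ, zero_smul])
  have hq : perp p.x ⬝ᵥ p.z *ᵥ perp p.x = 0 := by
    have := (onX_iff p).mp hp
    rwa [hy, perp_smul, mulVec_smul, dotProduct_smul, smul_eq_mul, mul_eq_zero,
      or_iff_right hμ] at this
  obtain ⟨v, hz⟩ := exists_eq_vecMulVec_add_vecMulVec hr p.hzsymm hq
  have hdet : (of ![p.x, v])ᵀ.det ≠ 0 := by
    rw [det_transpose_of_fin_two, dotProduct_perp_comm, neg_ne_zero]
    intro h
    apply hpE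
    rw [memE_iff, hz, vecMulVec_add_vecMulVec_mulVec_perp, h, zero_smul]
  obtain ⟨g, s, hs, hg⟩ := exists_specialLinearGroup_eq_smul hdet
  refine ⟨g, s, s * μ⁻¹, s ^ 2, hs, mul_ne_zero hs (inv_ne_zero hμ), pow_ne_zero 2 hs, ?_, ?_, ?_⟩
  all_goals simp only [stdPoint, hg]
  · rw [smul_mulVec, transpose_of_mulVec_one_zero]
  · rw [smul_mulVec, transpose_of_mulVec_one_zero, hy, smul_smul, inv_mul_cancel_right₀ hμ]
  · rw [transpose_smul, transpose_transpose]
    simp only [Matrix.smul_mul, Matrix.mul_smul, smul_smul, ← pow_two]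
    rw [transpose_of_mul_antidiag_mul_of, hz]

theorem delta_minus_EF_single_orbit_general (p q : ProjPoint) (hp : onX p) (hq : onX q)
    (hpD : memDelta p) (hpE : ¬ memE p)
    (hqD : memDelta q) (hqE : ¬ memE q) :
    sameOrbit p q :=
  (sameOrbit_stdPoint hp hpD hpE).symm.trans (sameOrbit_stdPoint hq hqD hqE)

/-- **Statement 13.** `Δ ∖ (E ∪ F)` is a single orbit of `G = SL(2,ℂ)`: any two points of `Δ`
lying in neither `E` nor `F` lie in the same `G`-orbit. -/
theorem delta_minus_EF_single_orbit (p q : ProjPoint) (hp : onX p) (hq : onX q)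
    (hpD : memDelta p) (hpE : ¬ memE p) (hpF : ¬ memF p)
    (hqD : memDelta q) (hqE : ¬ memE q) (hqF : ¬ memF q) :
    sameOrbit p q :=
  delta_minus_EF_single_orbit_general p q hp hq hpD hpE hqD hqE
end

section
/- E ∖ Δ and F ∖ Δ are each single orbits of G = SL(2,ℂ): any two points of E not lying in Δ lie in the same G-orbit, and any two points of F not lying in Δ lie in the same G-orbit. -/
open Matrix

/-!
On `E` the two defining equations say that both columns of the symmetric matrix `z` are
proportional to `x`, so `z = c • x xᵀ` with `c ≠ 0`; likewise `z = c • y yᵀ` on `F`. Off `Δ` the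
vectors `x, y` form a basis, and the element of `SL(2,ℂ)` sending `x ↦ e₀` and `y ↦ det[x y] • e₁`
moves the point to `(e₀, e₁, e₀e₀ᵀ)` on `E` and to `(e₀, e₁, e₁e₁ᵀ)` on `F`.
-/

open scoped MatrixGroups

namespace Matrix

variable {K : Type*} [Field K]

theorem exists_eq_smul_vecMulVec_of_cross_eq_zero {z : Matrix (Fin 2) (Fin 2) K}
    {v : Fin 2 → K} (hz : zᵀ = z) (hv : v ≠ 0)
    (h₀ : v 1 * z 0 0 - v 0 * z 0 1 = 0) (h₁ : v 1 * z 0 1 - v 0 * z 1 1 = 0) :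
    ∃ c : K, z = c • vecMulVec v v := by
  have hsym : z 1 0 = z 0 1 := congr($hz 0 1)
  obtain ⟨i, hi⟩ := Function.ne_iff.mp hv
  refine ⟨z i i / v i ^ 2, ?_⟩
  ext a b
  fin_cases i <;> fin_cases a <;> fin_cases b <;> simp [vecMulVec_apply, hsym] at hi ⊢ <;>
    field_simp <;> grind

theorem exists_specialLinearGroup_mulVec_eq {x y : Fin 2 → K}
    (hxy : x 0 * y 1 - x 1 * y 0 ≠ 0) :
    ∃ g : SL(2, K), (g : Matrix (Fin 2) (Fin 2) K) *ᵥ x = ![1, 0] ∧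
      (g : Matrix (Fin 2) (Fin 2) K) *ᵥ y = (x 0 * y 1 - x 1 * y 0) • ![0, 1] := by
  set d := x 0 * y 1 - x 1 * y 0
  -- the inverse of the matrix with columns `x` and `d⁻¹ • y`
  refine ⟨⟨!![y 1 / d, -(y 0 / d); -x 1, x 0], ?_⟩, ?_, ?_⟩
  · rw [det_fin_two_of]; field_simp; ring
  all_goals ext i; fin_cases i <;> simp [mulVec, dotProduct] <;> field_simp <;> ring

variable {n : Type*} [Fintype n]

theorem mul_vecMulVec_mul_transpose (g : Matrix n n K) (v : n → K) :
    g * vecMulVec v v * gᵀ = vecMulVec (g *ᵥ v) (g *ᵥ v) := by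
  rw [mul_vecMulVec, vecMulVec_mul, vecMul_transpose]

variable [DecidableEq n] {A B : Matrix n n K}

theorem mulVec_eq_inv_smul_of_mul_eq_one {u v : n → K} {a : K} (hBA : B * A = 1) (ha : a ≠ 0)
    (h : A *ᵥ u = a • v) : B *ᵥ v = a⁻¹ • u := by
  rw [← inv_smul_smul₀ ha v, ← h, mulVec_smul, mulVec_mulVec, hBA, one_mulVec]

theorem mul_mul_transpose_eq_inv_smul_of_mul_eq_one {z w : Matrix n n K} {c : K}
    (hBA : B * A = 1) (hc : c ≠ 0) (h : A * z * Aᵀ = c • w) : B * w * Bᵀ = c⁻¹ • z := by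
  calc B * w * Bᵀ = c⁻¹ • (B * (c • w) * Bᵀ) := by
        rw [Matrix.mul_smul, Matrix.smul_mul, inv_smul_smul₀ hc]
    _ = c⁻¹ • ((B * A) * z * (B * A)ᵀ) := by
        rw [← h, transpose_mul]; simp only [Matrix.mul_assoc]
    _ = c⁻¹ • z := by rw [hBA, transpose_one, Matrix.one_mul, Matrix.mul_one]

end Matrix

theorem sameOrbit.symm_s9 {p q : ProjPoint} (h : sameOrbit p q) : sameOrbit q p := by
  obtain ⟨g, a, b, c, ha, hb, hc, hx, hy, hz⟩ := h
  have hinv : ((g⁻¹ : SL(2, ℂ)) : Matrix (Fin 2) (Fin 2) ℂ) * g = 1 := by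
    rw [← Matrix.SpecialLinearGroup.coe_mul, inv_mul_cancel, Matrix.SpecialLinearGroup.coe_one]
  exact ⟨g⁻¹, a⁻¹, b⁻¹, c⁻¹, inv_ne_zero ha, inv_ne_zero hb, inv_ne_zero hc,
    mulVec_eq_inv_smul_of_mul_eq_one hinv ha hx, mulVec_eq_inv_smul_of_mul_eq_one hinv hb hy,
    mul_mul_transpose_eq_inv_smul_of_mul_eq_one hinv hc hz⟩

theorem sameOrbit.trans_s9 {p q r : ProjPoint} (h₁ : sameOrbit p q) (h₂ : sameOrbit q r) :
    sameOrbit p r := by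
  obtain ⟨g₁, a₁, b₁, c₁, ha₁, hb₁, hc₁, hx₁, hy₁, hz₁⟩ := h₁
  obtain ⟨g₂, a₂, b₂, c₂, ha₂, hb₂, hc₂, hx₂, hy₂, hz₂⟩ := h₂
  refine ⟨g₂ * g₁, a₁ * a₂, b₁ * b₂, c₁ * c₂, mul_ne_zero ha₁ ha₂, mul_ne_zero hb₁ hb₂,
    mul_ne_zero hc₁ hc₂, ?_, ?_, ?_⟩
  · rw [Matrix.SpecialLinearGroup.coe_mul, ← mulVec_mulVec, hx₁, mulVec_smul, hx₂, smul_smul]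
  · rw [Matrix.SpecialLinearGroup.coe_mul, ← mulVec_mulVec, hy₁, mulVec_smul, hy₂, smul_smul]
  · calc ((g₂ * g₁ : SL(2, ℂ)) : Matrix (Fin 2) (Fin 2) ℂ) * p.z *
          ((g₂ * g₁ : SL(2, ℂ)) : Matrix (Fin 2) (Fin 2) ℂ)ᵀ
        = (g₂ : Matrix (Fin 2) (Fin 2) ℂ) * (g₁ * p.z * (g₁ : Matrix (Fin 2) (Fin 2) ℂ)ᵀ) *
          (g₂ : Matrix (Fin 2) (Fin 2) ℂ)ᵀ := by
          simp only [Matrix.SpecialLinearGroup.coe_mul, transpose_mul, Matrix.mul_assoc]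
      _ = (c₁ * c₂) • r.z := by
          rw [hz₁, Matrix.mul_smul, Matrix.smul_mul, hz₂, smul_smul]

namespace ProjPoint

theorem z_eq_smul_vecMulVec_x_of_memE {p : ProjPoint} (hE : memE p) :
    ∃ c : ℂ, c ≠ 0 ∧ p.z = c • vecMulVec p.x p.x := by
  obtain ⟨c, hc⟩ := exists_eq_smul_vecMulVec_of_cross_eq_zero p.hzsymm p.hx hE.1 hE.2
  exact ⟨c, by rintro rfl; exact p.hz (by simpa using hc), hc⟩

theorem z_eq_smul_vecMulVec_y_of_memF {p : ProjPoint} (hF : memF p) :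
    ∃ c : ℂ, c ≠ 0 ∧ p.z = c • vecMulVec p.y p.y := by
  obtain ⟨c, hc⟩ :=
    exists_eq_smul_vecMulVec_of_cross_eq_zero p.hzsymm p.hy hF.1 (by linear_combination -hF.2)
  exact ⟨c, by rintro rfl; exact p.hz (by simpa using hc), hc⟩

def standard (v : Fin 2 → ℂ) (hv : v ≠ 0) : ProjPoint where
  x := ![1, 0]
  y := ![0, 1]
  z := vecMulVec v v
  hx := fun h => one_ne_zero congr($h 0)
  hy := fun h => one_ne_zero congr($h 1)
  hz := vecMulVec_ne_zero hv hv
  hzsymm := transpose_vecMulVec v v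

theorem sameOrbit_standard_of_memE {p : ProjPoint} (hE : memE p) (hΔ : ¬ memDelta p) :
    sameOrbit p (standard ![1, 0] (by simp)) := by
  obtain ⟨c, hc, hz⟩ := z_eq_smul_vecMulVec_x_of_memE hE
  obtain ⟨g, hgx, hgy⟩ := exists_specialLinearGroup_mulVec_eq hΔ
  refine ⟨g, 1, _, c, one_ne_zero, hΔ, hc, by rw [hgx, one_smul]; rfl, hgy, ?_⟩
  rw [hz, Matrix.mul_smul, Matrix.smul_mul, mul_vecMulVec_mul_transpose, hgx]
  rfl

theorem sameOrbit_standard_of_memF {p : ProjPoint} (hF : memF p) (hΔ : ¬ memDelta p) :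
    sameOrbit p (standard ![0, 1] (by simp)) := by
  obtain ⟨c, hc, hz⟩ := z_eq_smul_vecMulVec_y_of_memF hF
  obtain ⟨g, hgx, hgy⟩ := exists_specialLinearGroup_mulVec_eq hΔ
  refine ⟨g, 1, _, c * (p.x 0 * p.y 1 - p.x 1 * p.y 0) ^ 2, one_ne_zero, hΔ,
    mul_ne_zero hc (pow_ne_zero 2 hΔ), by rw [hgx, one_smul]; rfl, hgy, ?_⟩
  rw [hz, Matrix.mul_smul, Matrix.smul_mul, mul_vecMulVec_mul_transpose, hgy, smul_vecMulVec,
    vecMulVec_smul, smul_smul, smul_smul, mul_assoc, ← sq]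
  rfl

end ProjPoint

/-- **Statement 14.** `E ∖ Δ` and `F ∖ Δ` are each single orbits of `G = SL(2,ℂ)`: any two
points of `E` not lying in `Δ` lie in the same `G`-orbit, and any two points of `F` not lying in
`Δ` lie in the same `G`-orbit. -/
theorem E_and_F_minus_delta_single_orbits :
    (∀ p q : ProjPoint, onX p → onX q → memE p → ¬ memDelta p → memE q → ¬ memDelta q →
      sameOrbit p q) ∧
    (∀ p q : ProjPoint, onX p → onX q → memF p → ¬ memDelta p → memF q → ¬ memDelta q →
      sameOrbit p q) := by
  refine ⟨fun p q _ _ hp hpΔ hq hqΔ => ?_, fun p q _ _ hp hpΔ hq hqΔ => ?_⟩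
  · exact (ProjPoint.sameOrbit_standard_of_memE hp hpΔ).trans_s9
      (ProjPoint.sameOrbit_standard_of_memE hq hqΔ).symm_s9
  · exact (ProjPoint.sameOrbit_standard_of_memF hp hpΔ).trans_s9
      (ProjPoint.sameOrbit_standard_of_memF hq hqΔ).symm_s9
end

section
/- Consider the action of SL(2,ℂ) on ℙ¹ × ℙ², where ℙ¹ = P(ℂ²) carries the standard linear action and ℙ² is the projectivization of symmetric 2×2 complex matrices with the action g·[M] := [g M gᵀ]. The stabilizer of the point ([e₁], [I]) (in homogeneous coordinates, ([1:0],[1:0:1])) is the cyclic group of order 4 consisting of the matrices diag(a, a⁻¹) with a⁴ = 1, generated by diag(i, −i). -/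
open Matrix

/-- The matrix `diag(i, −i)` as an element of `SL(2,ℂ)`. -/
noncomputable def Jgen : Matrix.SpecialLinearGroup (Fin 2) ℂ :=
  ⟨!![Complex.I, 0; 0, -Complex.I], by
    norm_num [Matrix.det_fin_two_of, Complex.I_mul_I]⟩

/-- `g` stabilizes the point `([e₁], [I]) ∈ ℙ¹ × ℙ²`, where `ℙ¹ = P(ℂ²)` carries the standard
linear action and `ℙ²` (the projectivized symmetric `2×2` matrices) carries the action
`g·[M] = [g M gᵀ]`. -/
def stabilizesE1I (g : Matrix.SpecialLinearGroup (Fin 2) ℂ) : Prop :=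
  (∃ a : ℂ, a ≠ 0 ∧ (g : Matrix (Fin 2) (Fin 2) ℂ) *ᵥ ![1, 0] = a • ![(1 : ℂ), 0]) ∧
  (∃ b : ℂ, b ≠ 0 ∧
    (g : Matrix (Fin 2) (Fin 2) ℂ) * 1 * (g : Matrix (Fin 2) (Fin 2) ℂ)ᵀ =
      b • (1 : Matrix (Fin 2) (Fin 2) ℂ))

lemma diag_eq (a : ℂ) : Matrix.diagonal ![a, a⁻¹] = !![a, 0; 0, a⁻¹] := by
  ext i j; fin_cases i <;> fin_cases j <;> simp [Matrix.diagonal]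

lemma inv_of_root (a : ℂ) (ha : a ^ 4 = 1) : a⁻¹ = a ^ 3 := by
  refine inv_eq_of_mul_eq_one_right ?_
  calc a * a ^ 3 = a ^ 4 := by ring
  _ = 1 := ha

lemma key (g : Matrix.SpecialLinearGroup (Fin 2) ℂ) : stabilizesE1I g ↔
    ∃ a : ℂ, a ^ 4 = 1 ∧ (g : Matrix (Fin 2) (Fin 2) ℂ) = Matrix.diagonal ![a, a⁻¹] := by
  constructor
  · rintro ⟨⟨a, ha, hv⟩, ⟨b, hb, hm⟩⟩
    have h0 := congrFun hv 0
    have h1 := congrFun hv 1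
    simp [Matrix.mulVec, dotProduct, Fin.sum_univ_two] at h0 h1
    have hdet : (g : Matrix (Fin 2) (Fin 2) ℂ).det = 1 := g.2
    rw [Matrix.det_fin_two] at hdet
    rw [mul_one] at hm
    have h00 := congrFun (congrFun hm 0) 0
    have h01 := congrFun (congrFun hm 0) 1
    have h11 := congrFun (congrFun hm 1) 1
    simp [Matrix.mul_apply, Fin.sum_univ_two, Matrix.one_apply] at h00 h01 h11
    rw [h1, mul_zero, sub_zero, h0] at hdet
    -- hdet : a * g 1 1 = 1
    have hs : (g : Matrix (Fin 2) (Fin 2) ℂ) 1 1 ≠ 0 := by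
      intro h; rw [h, mul_zero] at hdet; exact zero_ne_one hdet
    rw [h1, mul_zero, zero_add] at h01
    have hq : (g : Matrix (Fin 2) (Fin 2) ℂ) 0 1 = 0 :=
      (mul_eq_zero.mp h01).resolve_right hs
    rw [h0, hq, mul_zero, add_zero] at h00
    simp only [h1, zero_mul, mul_zero, zero_add] at h11
    -- h00 : a * a = b, h11 : g 1 1 * g 1 1 = b
    refine ⟨a, ?_, ?_⟩
    · have : (g : Matrix (Fin 2) (Fin 2) ℂ) 1 1 = a⁻¹ := by
        field_simp at hdet ⊢; linear_combination hdet
      rw [this] at h11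
      have h4 : a ^ 2 = a⁻¹ * a⁻¹ := by rw [h11, ← h00]; ring
      field_simp at h4
      linear_combination h4
    · have hga : (g : Matrix (Fin 2) (Fin 2) ℂ) 1 1 = a⁻¹ := by
        field_simp at hdet ⊢; linear_combination hdet
      rw [Matrix.eta_fin_two (g : Matrix (Fin 2) (Fin 2) ℂ), h0, h1, hq, hga]
      ext i j; fin_cases i <;> fin_cases j <;> simp [Matrix.diagonal]
  · rintro ⟨a, ha, hg⟩
    have ha0 : a ≠ 0 := by
      intro h; rw [h] at ha; norm_num at ha
    have hinv : a⁻¹ * a⁻¹ = a ^ 2 := by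
      rw [inv_of_root a ha]
      linear_combination a ^ 2 * ha
    refine ⟨⟨a, ha0, ?_⟩, ⟨a ^ 2, pow_ne_zero 2 ha0, ?_⟩⟩
    · rw [hg]
      funext i
      rw [Matrix.mulVec_diagonal]
      fin_cases i <;> simp
    · have hvv : (fun i => ![a, a⁻¹] i * ![a, a⁻¹] i) = fun _ : Fin 2 => a ^ 2 := by
        funext i
        fin_cases i
        · simp [sq]
        · simpa [sq] using hinv
      rw [hg, mul_one, Matrix.diagonal_transpose, Matrix.diagonal_mul_diagonal, hvv,
        Matrix.smul_one_eq_diagonal]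

lemma Hone (a : ℂ) (h : a = 1) : Matrix.diagonal ![a, a⁻¹] = (1 : Matrix (Fin 2) (Fin 2) ℂ) := by
  subst h
  rw [inv_one, ← Matrix.diagonal_one]
  congr 1
  funext i; fin_cases i <;> rfl

noncomputable def Hsub : Subgroup (Matrix.SpecialLinearGroup (Fin 2) ℂ) where
  carrier := {g | ∃ a : ℂ, a ^ 4 = 1 ∧ (g : Matrix (Fin 2) (Fin 2) ℂ) = Matrix.diagonal ![a, a⁻¹]}
  one_mem' := ⟨1, one_pow 4, by rw [Hone 1 rfl]; rfl⟩
  mul_mem' := by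
    rintro g h ⟨a, ha, hg⟩ ⟨c, hc, hh⟩
    refine ⟨a * c, by rw [mul_pow, ha, hc, one_mul], ?_⟩
    have : ((g * h : Matrix.SpecialLinearGroup (Fin 2) ℂ) : Matrix (Fin 2) (Fin 2) ℂ)
        = (g : Matrix (Fin 2) (Fin 2) ℂ) * h := rfl
    have hvec : (fun i => ![a, a⁻¹] i * ![c, c⁻¹] i) = ![a * c, (a * c)⁻¹] := by
      funext i; fin_cases i <;> simp [_root_.mul_inv_rev, mul_comm]
    rw [this, hg, hh, Matrix.diagonal_mul_diagonal, hvec]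
  inv_mem' := by
    rintro g ⟨a, ha, hg⟩
    refine ⟨a⁻¹, by rw [inv_pow, ha, inv_one], ?_⟩
    rw [Matrix.SpecialLinearGroup.coe_inv, hg, diag_eq, Matrix.adjugate_fin_two, diag_eq, inv_inv]
    norm_num

lemma Jgen_mem : Jgen ∈ Hsub := by
  refine ⟨Complex.I, by simp [pow_succ, Complex.I_mul_I], ?_⟩
  show !![Complex.I, 0; 0, -Complex.I] = _
  rw [diag_eq, Complex.inv_I]

lemma coeJ2 : ((Jgen ^ 2 : Matrix.SpecialLinearGroup (Fin 2) ℂ) : Matrix (Fin 2) (Fin 2) ℂ)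
    = !![-1, 0; 0, -1] := by
  rw [Matrix.SpecialLinearGroup.coe_pow]
  show (!![Complex.I, 0; 0, -Complex.I]) ^ 2 = _
  rw [sq]
  ext i j; fin_cases i <;> fin_cases j <;>
    simp [Matrix.mul_apply, Fin.sum_univ_two, Complex.I_mul_I]

lemma coeJ3 : ((Jgen ^ 3 : Matrix.SpecialLinearGroup (Fin 2) ℂ) : Matrix (Fin 2) (Fin 2) ℂ)
    = !![-Complex.I, 0; 0, Complex.I] := by
  rw [Matrix.SpecialLinearGroup.coe_pow]
  show (!![Complex.I, 0; 0, -Complex.I]) ^ 3 = _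
  rw [pow_succ, sq]
  ext i j; fin_cases i <;> fin_cases j <;>
    simp [Matrix.mul_apply, Fin.sum_univ_two, Complex.I_mul_I]

lemma J4 : Jgen ^ 4 = 1 := by
  ext i j
  rw [Matrix.SpecialLinearGroup.coe_pow]
  show ((!![Complex.I, 0; 0, -Complex.I]) ^ 4) i j = _
  rw [pow_succ, pow_succ, sq]
  fin_cases i <;> fin_cases j <;>
    simp [Matrix.mul_apply, Fin.sum_univ_two, Complex.I_mul_I,
      Matrix.SpecialLinearGroup.coe_one, Matrix.one_apply]

lemma coeJ1 : ((Jgen : Matrix.SpecialLinearGroup (Fin 2) ℂ) : Matrix (Fin 2) (Fin 2) ℂ)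
    = Matrix.diagonal ![Complex.I, Complex.I⁻¹] := by
  rw [diag_eq, Complex.inv_I]; rfl


/-- **Statement 17.** The stabilizer of `([e₁],[I]) ∈ ℙ¹ × ℙ²` in `SL(2,ℂ)` is the cyclic group
of order 4 consisting of the matrices `diag(a, a⁻¹)` with `a⁴ = 1`, generated by `diag(i, −i)`. -/
theorem stabilizer_of_e1_and_I :
    (∀ g : Matrix.SpecialLinearGroup (Fin 2) ℂ, stabilizesE1I g ↔
      ∃ a : ℂ, a ^ 4 = 1 ∧ (g : Matrix (Fin 2) (Fin 2) ℂ) = Matrix.diagonal ![a, a⁻¹]) ∧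
    (∀ g : Matrix.SpecialLinearGroup (Fin 2) ℂ, stabilizesE1I g ↔ g ∈ Subgroup.zpowers Jgen) ∧
    orderOf Jgen = 4 := by
  refine ⟨key, ?_, ?_⟩
  · intro g
    rw [key]
    constructor
    · rintro ⟨a, ha, hg⟩
      have hroots : (a - 1) * (a + 1) * (a - Complex.I) * (a + Complex.I) = 0 := by
        linear_combination ha + (1 - a ^ 2) * Complex.I_mul_I
      rcases mul_eq_zero.mp hroots with h | h
      · rcases mul_eq_zero.mp h with h | h
        · rcases mul_eq_zero.mp h with h | h
          · -- a = 1
            refine ⟨0, ?_⟩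
            show Jgen ^ (0:ℤ) = g
            rw [zpow_zero]
            refine (Subtype.ext ?_).symm
            rw [hg, Hone a (sub_eq_zero.mp h)]
            rfl
          · -- a = -1
            have ha' : a = -1 := eq_neg_of_add_eq_zero_left h
            refine ⟨2, ?_⟩
            show Jgen ^ (2:ℤ) = g
            refine Subtype.ext ?_
            rw [show (Jgen ^ (2:ℤ)) = Jgen ^ (2:ℕ) by rw [zpow_two, sq], coeJ2, hg, ha', diag_eq]
            norm_num
        · -- a = I
          have ha' : a = Complex.I := sub_eq_zero.mp h
          refine ⟨1, ?_⟩
          show Jgen ^ (1:ℤ) = g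
          rw [zpow_one]
          exact Subtype.ext (by rw [coeJ1, hg, ha'])
      · -- a = -I
        have ha' : a = -Complex.I := eq_neg_of_add_eq_zero_left h
        refine ⟨3, ?_⟩
        show Jgen ^ (3:ℤ) = g
        refine Subtype.ext ?_
        rw [show (Jgen ^ (3:ℤ)) = Jgen ^ (3:ℕ) by norm_cast, coeJ3, hg, ha', diag_eq]
        rw [inv_neg, Complex.inv_I, neg_neg]
    · intro h
      exact (Subgroup.zpowers_le.mpr Jgen_mem) h
  · haveI : Fact (Nat.Prime 2) := ⟨by norm_num⟩
    have h2 : ¬ Jgen ^ 2 ^ 1 = 1 := by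
      intro h
      have h00 : ((Jgen ^ 2 : Matrix.SpecialLinearGroup (Fin 2) ℂ) :
          Matrix (Fin 2) (Fin 2) ℂ) 0 0 = 1 := by
        rw [pow_one] at h
        rw [h]
        rfl
      rw [coeJ2] at h00
      norm_num at h00
    have h4 : Jgen ^ 2 ^ 2 = 1 := by
      norm_num
      exact J4
    have := orderOf_eq_prime_pow h2 h4
    rw [this]
    norm_num
end
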